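/- In the alphabetic topology on Γ^∞, the closure of A^im equals the union of all B^im over supersets B ⊇ A, i.e., closure(A^im) = ⋃_{A ⊆ B ⊆ Γ} B^im. -/

import Mathlib

namespace InfWords

variable {Γ : Type}

/-- Finite and infinite words over `Γ`: `Γ^∞ = Γ* ∪ Γ^ω`. -/
abbrev Word (Γ : Type) := List Γ ⊕ (ℕ → Γ)

/-- Prepend a finite word to a finite or infinite word. -/
def wappend (u : List Γ) : Word Γ → Word Γ
  | Sum.inl v => Sum.inl (u ++ v)
  | Sum.inr f => Sum.inr fun n => if h : n < u.length then u.get ⟨n, h⟩ else f (n - u.length)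

/-- The set of finite words `Γ*` inside `Γ^∞`. -/
def finWords (Γ : Type) : Set (Word Γ) := Set.range Sum.inl

/-- The set of infinite words `Γ^ω` inside `Γ^∞`. -/
def infWords (Γ : Type) : Set (Word Γ) := Set.range Sum.inr

/-- The alphabet of a word: the letters occurring in it. -/
def alph : Word Γ → Set Γ
  | Sum.inl u => {a | a ∈ u}
  | Sum.inr f => {a | ∃ n, f n = a}

/-- The imaginary part: letters occurring infinitely often. -/
def im : Word Γ → Set Γ
  | Sum.inl _ => ∅
  | Sum.inr f => {a | ∀ n, ∃ m, n ≤ m ∧ f m = a}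

/-- `A^∞`: words all of whose letters lie in `A`. -/
def infin (A : Set Γ) : Set (Word Γ) := {α | alph α ⊆ A}

/-- The basic set `u A^∞` of the alphabetic topology. -/
def cone (u : List Γ) (A : Set Γ) : Set (Word Γ) := wappend u '' infin A

/-- The alphabetic topology on `Γ^∞`, generated by the sets `u A^∞`. -/
instance alphTop : TopologicalSpace (Word Γ) :=
  TopologicalSpace.generateFrom {S | ∃ u A, S = cone u A}

/-- `cpx A`: words with `alph = im = A`. -/
def cpx (A : Set Γ) : Set (Word Γ) := {β | alph β = A ∧ im β = A}

/-- The strict alphabetic topology, generated by the sets `u · cpx A`. -/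
def strictTopo (Γ : Type) : TopologicalSpace (Word Γ) :=
  TopologicalSpace.generateFrom {S | ∃ u A, S = wappend u '' cpx A}

/-- `u` is a finite prefix of the word `α`. -/
def IsPre (u : List Γ) : Word Γ → Prop
  | Sum.inl v => u <+: v
  | Sum.inr f => ∀ i : Fin u.length, u.get i = f i.1

/-- The arrow language `→W`: every prefix extends to a prefix lying in `W`. -/
def arrow (W : Set (List Γ)) : Set (Word Γ) :=
  {α | ∀ u, IsPre u α → ∃ v, IsPre (u ++ v) α ∧ u ++ v ∈ W}

/-- The right quotient `L / A^∞`. -/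
def quotInf (L : Set (Word Γ)) (A : Set Γ) : Set (List Γ) :=
  {u | ∃ β ∈ infin A, wappend u β ∈ L}

/-- `A^im`: words whose set of letters occurring infinitely often is exactly `A`. -/
def imSet (A : Set Γ) : Set (Word Γ) := {α | im α = A}

/-- `z^ω`, with the convention `1^ω = 1`. -/
def omegaPow : List Γ → Word Γ
  | [] => Sum.inl []
  | a :: l => Sum.inr fun n => (a :: l).get ⟨n % (a :: l).length, Nat.mod_lt n (Nat.succ_pos _)⟩

/-- The partial products `u v₀ v₁ ⋯ v_{n-1}`. -/
def partialProd (u : List Γ) (v : ℕ → List Γ) (n : ℕ) : List Γ :=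
  u ++ ((List.range n).map v).flatten

/-- `α` is the (finite or infinite) product `u v₀ v₁ v₂ ⋯`, with convention `1^ω = 1`. -/
def IsInfProd (u : List Γ) (v : ℕ → List Γ) : Word Γ → Prop
  | Sum.inl w => (∀ n, partialProd u v n <+: w) ∧ ∃ n, partialProd u v n = w
  | Sum.inr f => (∀ n, IsPre (partialProd u v n) (Sum.inr f)) ∧
      ∀ k, ∃ n, k < (partialProd u v n).length

/-- `h : Γ* → M` is a monoid homomorphism. -/
structure IsHom {M : Type} [Monoid M] (h : List Γ → M) : Prop where
  map_one : h [] = 1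
  map_mul : ∀ u v, h (u ++ v) = h u * h v

/-- `[s][e]^ω`: products `u v₀ v₁ ⋯` with `h u = s` and `h vᵢ = e`. -/
def pairSet {M : Type} (h : List Γ → M) (s e : M) : Set (Word Γ) :=
  {α | ∃ u v, h u = s ∧ (∀ i, h (v i) = e) ∧ IsInfProd u v α}

/-- `(s, e)` is a linked pair. -/
def LinkedPair {M : Type} [Monoid M] (s e : M) : Prop := s * e = s ∧ e * e = e

/-- `h` strongly recognizes `L`. -/
def StronglyRecognizes {M : Type} [Monoid M] (h : List Γ → M) (L : Set (Word Γ)) : Prop :=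
  L = ⋃ (s : M) (e : M) (_ : LinkedPair s e ∧ (pairSet h s e ∩ L).Nonempty), pairSet h s e

/-- `L` is regular: strongly recognized by a surjective homomorphism onto a finite monoid. -/
def Regular (L : Set (Word Γ)) : Prop :=
  ∃ (M : Type) (i : Monoid M), Finite M ∧
    ∃ h : List Γ → M, @IsHom Γ M i h ∧ Function.Surjective h ∧ @StronglyRecognizes Γ M i h L

/-- `L` is deterministic. -/
def Deterministic (L : Set (Word Γ)) : Prop :=
  Regular L ∧ ∃ W : Set (List Γ), L ∩ infWords Γ = arrow W ∩ infWords Γ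

/-- The syntactic preorder `u ≤_L v`. -/
def synLe (L : Set (Word Γ)) (u v : List Γ) : Prop :=
  ∀ x y z : List Γ,
    (wappend (x ++ v ++ y) (omegaPow z) ∈ L → wappend (x ++ u ++ y) (omegaPow z) ∈ L) ∧
    (wappend x (omegaPow (v ++ y)) ∈ L → wappend x (omegaPow (u ++ y)) ∈ L)

/-- The syntactic congruence `u ≡_L v`. -/
def synEq (L : Set (Word Γ)) (u v : List Γ) : Prop := synLe L u v ∧ synLe L v u

/-- `[s][e]^ω` for syntactic classes represented by words `s`, `e`. -/
def pairSetSyn (L : Set (Word Γ)) (s e : List Γ) : Set (Word Γ) :=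
  {α | ∃ u v, synEq L u s ∧ (∀ i, synEq L (v i) e) ∧ IsInfProd u v α}

/-- `s` represents an element of `M_e` in the syntactic monoid of `L`:
`s` is a product of words each of which is a factor of (something equivalent to) `e`. -/
def InMe (L : Set (Word Γ)) (e s : List Γ) : Prop :=
  ∃ parts : List (List Γ), s = parts.flatten ∧ ∀ p ∈ parts, ∃ x y, synEq L (x ++ p ++ y) e

/-- Glue a factorization `u₁ a₁ u₂ a₂ ⋯ u_k a_k` into a single finite word. -/
def glue : List (List Γ) → List (Set Γ × Γ) → List Γ
  | x :: xs, p :: l => x ++ p.2 :: glue xs l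
  | _, _ => []

/-- `(us, β)` is a factorization of `α` as `u₁ a₁ ⋯ u_k a_k β` with `uᵢ ∈ Aᵢ*`, `β ∈ B^∞`. -/
def IsFactorization (l : List (Set Γ × Γ)) (B : Set Γ) (us : List (List Γ)) (β : Word Γ)
    (α : Word Γ) : Prop :=
  us.length = l.length ∧
  (∀ (i : ℕ) (h1 : i < us.length) (h2 : i < l.length),
    ∀ c ∈ us.get ⟨i, h1⟩, c ∈ (l.get ⟨i, h2⟩).1) ∧
  β ∈ infin B ∧ α = wappend (glue us l) β

/-- The monomial `A₁* a₁ ⋯ A_k* a_k B^∞`. -/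
def monomial (l : List (Set Γ × Γ)) (B : Set Γ) : Set (Word Γ) :=
  {α | ∃ us β, IsFactorization l B us β α}

/-- The monomial given by `(l, B)` is unambiguous. -/
def Unambiguous (l : List (Set Γ × Γ)) (B : Set Γ) : Prop :=
  ∀ α us β us' β', IsFactorization l B us β α → IsFactorization l B us' β' α →
    us = us' ∧ β = β'

/-- `L` is a polynomial: a finite union of monomials. -/
def IsPolynomial (L : Set (Word Γ)) : Prop :=
  ∃ ms : List (List (Set Γ × Γ) × Set Γ), L = {α | ∃ m ∈ ms, α ∈ monomial m.1 m.2}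

/-- The set of marker letters of a monomial. -/
def sndSet (l : List (Set Γ × Γ)) : Set Γ := {a | ∃ p ∈ l, p.2 = a}

/-- `M_e`: the submonoid generated by the factors of the idempotent `e`. -/
def Msub {M : Type} [Monoid M] (e : M) : Submonoid M :=
  Submonoid.closure {t | ∃ x y, x * t * y = e}

/-- The variety `DA`: `ese = e` for all idempotents `e` and all `s ∈ M_e`. -/
def IsDA (M : Type) [Monoid M] : Prop :=
  ∀ e : M, e * e = e → ∀ s ∈ Msub e, e * s * e = e

end InfWords

/-!
A basic neighbourhood `u C^∞` of `α` satisfies `im α ⊆ C`, so once `n ≥ |u|` it contains every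
word `α[0, n) ω` with `alph ω ⊆ im α`. Choosing `ω` with `alph ω ⊆ A = im ω` gives words of `A^im`
converging to any `α` with `A ⊆ im α`. Conversely `{α | A ⊆ im α}` is closed: if `a ∉ im α`, then
`α` lies in the open set `u ({a}ᶜ)^∞` where `u` is a prefix past the last occurrence of `a`.
-/

open Filter Topology

namespace InfWords

variable {Γ : Type}

-- For a finite word shorter than `n`, `pref α n` is the whole word.
def pref : Word Γ → ℕ → List Γ
  | Sum.inl w, n => w.take n
  | Sum.inr f, n => (List.range n).map f

lemma wappend_append (u v : List Γ) (β : Word Γ) :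
    wappend (u ++ v) β = wappend u (wappend v β) := by
  cases β with
  | inl w => simp [wappend]
  | inr f =>
    simp only [wappend, List.get_eq_getElem, List.length_append, Sum.inr.injEq]
    funext n
    by_cases h₁ : n < u.length
    · simp [h₁, List.getElem_append_left h₁, show n < u.length + v.length by omega]
    by_cases h₂ : n < u.length + v.length
    · simp [h₁, h₂, List.getElem_append_right (not_lt.mp h₁), show n - u.length < v.length by omega]
    · simp [h₁, h₂, show ¬ n - u.length < v.length by omega, Nat.sub_add_eq]

lemma wappend_map_range_shift (f : ℕ → Γ) (n : ℕ) :
    wappend ((List.range n).map f) (Sum.inr fun k => f (k + n)) = Sum.inr f := by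
  simp only [wappend, List.length_map, List.length_range, List.get_eq_getElem, List.getElem_map,
    List.getElem_range, Sum.inr.injEq]
  funext m
  by_cases h : m < n
  · simp [h]
  · simp [h, Nat.sub_add_cancel (not_lt.mp h)]

lemma im_wappend (u : List Γ) (β : Word Γ) : im (wappend u β) = im β := by
  cases β with
  | inl w => rfl
  | inr f =>
    ext a
    simp only [wappend, im, Set.mem_ofPred_eq]
    constructor
    · intro h n
      obtain ⟨m, hm, he⟩ := h (n + u.length)
      rw [dif_neg (by omega)] at he
      exact ⟨m - u.length, by omega, he⟩
    · intro h n
      obtain ⟨m, hm, he⟩ := h n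
      refine ⟨m + u.length, by omega, ?_⟩
      simpa using he

lemma im_subset_alph (α : Word Γ) : im α ⊆ alph α := by
  cases α with
  | inl w => simp [im]
  | inr f =>
    intro a ha
    obtain ⟨m, -, he⟩ := ha 0
    exact ⟨m, he⟩

lemma alph_wappend (u : List Γ) (β : Word Γ) :
    alph (wappend u β) = {a | a ∈ u} ∪ alph β := by
  cases β with
  | inl w => ext a; simp [wappend, alph]
  | inr f =>
    ext a
    simp only [wappend, alph, Set.mem_ofPred_eq, Set.mem_union]
    constructor
    · rintro ⟨n, hn⟩
      by_cases h : n < u.length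
      · rw [dif_pos h] at hn
        exact Or.inl (hn ▸ List.get_mem u ⟨n, h⟩)
      · rw [dif_neg h] at hn
        exact Or.inr ⟨n - u.length, hn⟩
    · rintro (h | ⟨n, hn⟩)
      · obtain ⟨i, hi⟩ := List.mem_iff_get.mp h
        exact ⟨i, by rw [dif_pos i.2]; exact hi⟩
      · exact ⟨n + u.length, by simpa using hn⟩

lemma alph_pref_subset (α : Word Γ) (n : ℕ) : {a | a ∈ pref α n} ⊆ alph α := by
  cases α with
  | inl w => exact fun a ha => List.take_subset n w ha
  | inr f =>
    intro a ha
    obtain ⟨i, -, hi⟩ := List.mem_map.mp ha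
    exact ⟨i, hi⟩

lemma pref_wappend (u : List Γ) (β : Word Γ) {n : ℕ} (h : u.length ≤ n) :
    pref (wappend u β) n = u ++ pref β (n - u.length) := by
  cases β with
  | inl w => simp only [wappend, pref, List.take_append, List.take_of_length_le h]
  | inr f =>
    apply List.ext_getElem
    · simp [pref, wappend]; omega
    · intro i h₁ _
      simp only [wappend, pref, List.getElem_map, List.getElem_range]
      by_cases hi : i < u.length
      · simp [hi, List.getElem_append_left hi]
      · simp [hi, List.getElem_append_right (not_lt.mp hi)]

lemma wappend_mem_cone {u : List Γ} {C : Set Γ} {β : Word Γ} (h : alph β ⊆ C) :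
    wappend u β ∈ cone u C :=
  ⟨β, h, rfl⟩

lemma im_subset_of_mem_cone {u : List Γ} {C : Set Γ} {α : Word Γ} (h : α ∈ cone u C) :
    im α ⊆ C := by
  obtain ⟨β, hβ, rfl⟩ := h
  rw [im_wappend]
  exact (im_subset_alph β).trans hβ

lemma isOpen_cone (u : List Γ) (C : Set Γ) : IsOpen (cone u C) :=
  TopologicalSpace.GenerateOpen.basic _ ⟨u, C, rfl⟩

lemma exists_mem_cone_of_notMem_im {a : Γ} {α : Word Γ} (h : a ∉ im α) :
    ∃ u, α ∈ cone u {a}ᶜ := by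
  cases α with
  | inl w => exact ⟨w, ⟨Sum.inl [], by simp [infin, alph], by simp [wappend]⟩⟩
  | inr f =>
    obtain ⟨n, hn⟩ : ∃ n, ∀ m, n ≤ m → f m ≠ a := by
      simpa [im] using h
    refine ⟨(List.range n).map f, ?_⟩
    rw [← wappend_map_range_shift f n]
    refine wappend_mem_cone ?_
    rintro _ ⟨k, rfl⟩
    exact hn (k + n) (by omega)

lemma isOpen_setOf_notMem_im (a : Γ) : IsOpen {α : Word Γ | a ∉ im α} := by
  refine isOpen_iff_forall_mem_open.mpr fun α hα => ?_
  obtain ⟨u, hu⟩ := exists_mem_cone_of_notMem_im hα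
  exact ⟨cone u {a}ᶜ, fun β hβ ha => im_subset_of_mem_cone hβ ha rfl, isOpen_cone u _, hu⟩

lemma isClosed_setOf_subset_im (A : Set Γ) : IsClosed {α : Word Γ | A ⊆ im α} := by
  have h : {α : Word Γ | A ⊆ im α}ᶜ = ⋃ a ∈ A, {α : Word Γ | a ∉ im α} := by
    ext α
    simp [Set.not_subset]
  exact isOpen_compl_iff.mp (h ▸ isOpen_biUnion fun a _ => isOpen_setOf_notMem_im a)

lemma tendsto_wappend_pref {α ω : Word Γ} (hω : alph ω ⊆ im α) :
    Tendsto (fun n => wappend (pref α n) ω) atTop (𝓝 α) := by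
  refine TopologicalSpace.tendsto_nhds_generateFrom_iff.mpr ?_
  rintro _ ⟨u, C, rfl⟩ ⟨β, hβ, rfl⟩
  refine eventually_atTop.mpr ⟨u.length, fun n hn => ?_⟩
  dsimp only
  rw [pref_wappend u β hn, wappend_append]
  refine wappend_mem_cone ?_
  rw [alph_wappend]
  refine Set.union_subset ((alph_pref_subset β _).trans hβ) (hω.trans ?_)
  exact im_subset_of_mem_cone (wappend_mem_cone hβ)

lemma exists_im_eq_of_countable {A : Set Γ} (hA : A.Countable) :
    ∃ ω : Word Γ, im ω = A ∧ alph ω ⊆ A := by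
  rcases A.eq_empty_or_nonempty with rfl | hne
  · exact ⟨Sum.inl [], rfl, by simp [alph]⟩
  obtain ⟨e, rfl⟩ := hA.exists_eq_range hne
  -- `n ↦ e n.unpair.1` takes every value `e k` at all the indices `Nat.pair k m`.
  refine ⟨Sum.inr fun n => e n.unpair.1, Set.Subset.antisymm ?_ ?_, ?_⟩
  · intro b hb
    obtain ⟨m, -, hm⟩ := hb 0
    exact ⟨_, hm⟩
  · rintro _ ⟨k, rfl⟩ n
    exact ⟨Nat.pair k n, Nat.right_le_pair k n, by simp⟩
  · rintro _ ⟨n, rfl⟩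
    exact ⟨_, rfl⟩

lemma iUnion_imSet_superset (A : Set Γ) :
    ⋃ (B : Set Γ) (_ : A ⊆ B), imSet B = {α : Word Γ | A ⊆ im α} := by
  ext α
  simp [imSet]

end InfWords

open InfWords in
theorem closure_imSet (Γ : Type) [Fintype Γ] (A : Set Γ) :
    closure (InfWords.imSet A) = ⋃ (B : Set Γ) (_ : A ⊆ B), InfWords.imSet B := by
  rw [iUnion_imSet_superset]
  refine Set.Subset.antisymm ?_ ?_
  · exact closure_minimal (fun α (h : im α = A) => h.ge) (isClosed_setOf_subset_im A)
  · intro α hα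
    obtain ⟨ω, hωim, hωalph⟩ := exists_im_eq_of_countable A.toFinite.countable
    refine mem_closure_of_tendsto (tendsto_wappend_pref (hωalph.trans hα)) ?_
    exact Eventually.of_forall fun n => (im_wappend _ ω).trans hωim
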